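/- Let G be a cactus graph, i.e., a connected simple graph in which any two cycles whose edge sets are distinct have disjoint edge sets. Then any two cycles of G whose edge sets are distinct share at most one vertex; that is, if c₁ and c₂ are closed walks in G that are cycles and whose traversed edge sets differ, then the set of vertices visited by c₁ and the set of vertices visited by c₂ have at most one vertex in common. -/

import Mathlib

/-!
Suppose the cycles `c₁` and `c₂` met in two vertices `x ≠ y`. By the cactus property they are
edge-disjoint, so the arc of `c₁` from `y` to `x` is a walk avoiding `c₂`. Starting `c₂` at `x`
with first edge `xq`, the arc of `c₂` from `q` to `y` followed by that walk leads from `q` back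
to `x` without using `xq` or any edge of the arc of `c₂` from `y` to `x`. Hence `xq` lies on a
cycle that shares an edge with `c₂` without having the same edge set, which the cactus property
forbids.
-/

namespace SimpleGraph

variable {V : Type*} {G : SimpleGraph V}

theorem exists_isCycle_mem_edges_avoiding_of_walk {v w : V} (hadj : G.Adj v w)
    {s : Set (Sym2 V)} (hvw : s(v, w) ∉ s) (p : G.Walk v w) (hpe : s(v, w) ∉ p.edges)
    (hps : ∀ e ∈ p.edges, e ∉ s) :
    ∃ (u : V) (c : G.Walk u u), c.IsCycle ∧ s(v, w) ∈ c.edges ∧ ∀ e ∈ c.edges, e ∉ s := by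
  obtain ⟨u, c, hc, hvwc⟩ := adj_and_reachable_delete_edges_iff_exists_cycle.mp
    ⟨deleteEdges_adj.mpr ⟨hadj, hvw⟩, reachable_deleteEdges_iff_exists_walk.mpr
      ⟨p.toDeleteEdges s hps, by simpa [Walk.edges_transfer] using hpe⟩⟩
  refine ⟨u, c.mapLe (G.deleteEdges_le s), hc.mapLe _, by simpa [Walk.edges_mapLe_eq_edges], ?_⟩
  intro e he
  rw [Walk.edges_mapLe_eq_edges] at he
  exact (edgeSet_deleteEdges s ▸ c.edges_subset_edgeSet he).2

namespace Walk

theorem exists_walk_edges_subset_of_mem_support [DecidableEq V] {a b u v : V} (c : G.Walk a b)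
    (hu : u ∈ c.support) (hv : v ∈ c.support) :
    ∃ p : G.Walk u v, p.edges ⊆ c.edges := by
  refine ⟨(c.takeUntil u hu).reverse.append (c.takeUntil v hv), fun e he => ?_⟩
  rw [edges_append, edges_reverse, List.mem_append, List.mem_reverse] at he
  rcases he with he | he <;> exact edges_takeUntil_subset_edges _ _ he

theorem IsCycle.exists_overlapping_isCycle_of_start [DecidableEq V] {x y : V} {c : G.Walk x x}
    (hc : c.IsCycle) (hy : y ∈ c.support) (hxy : x ≠ y) (p : G.Walk y x)
    (hp : ∀ e ∈ p.edges, e ∉ c.edges) :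
    ∃ (u : V) (C : G.Walk u u), C.IsCycle ∧ (∃ e ∈ C.edges, e ∈ c.edges) ∧
      ∃ f ∈ c.edges, f ∉ C.edges := by
  cases c with
  | nil => exact absurd hc.ne_nil (by simp)
  | @cons _ q _ hxq c' =>
    obtain ⟨hc', hxqc'⟩ := (cons_isCycle_iff c' hxq).mp hc
    have hy' : y ∈ c'.support := by simpa [hxy.symm] using hy
    -- `c = x → q ⋯Q⋯ y ⋯R⋯ x`, and the detour is `Q ++ p`
    set Q := c'.takeUntil y hy'
    set R := c'.dropUntil y hy'
    have hsplit : c'.edges = Q.edges ++ R.edges := by rw [← edges_append, take_spec]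
    obtain ⟨f, hfR⟩ := List.exists_mem_of_ne_nil R.edges
      (edges_eq_nil.not.mpr (not_nil_of_ne hxy.symm))
    have hfc' : f ∈ c'.edges := hsplit ▸ List.mem_append_right _ hfR
    have hfQ : f ∉ Q.edges := fun hfQ =>
      List.disjoint_of_nodup_append (hsplit ▸ hc'.isTrail.edges_nodup) hfQ hfR
    have hQc' : Q.edges ⊆ c'.edges := edges_takeUntil_subset_edges _ _
    have hqx : s(q, x) ∈ (cons hxq c').edges := by simp [Sym2.eq_swap]
    have hqxf : s(q, x) ∉ ({f} : Set (Sym2 V)) := by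
      rintro rfl
      exact hxqc' (Sym2.eq_swap ▸ hfc')
    have hqxQp : s(q, x) ∉ (Q.append p).edges := by
      rw [edges_append, List.mem_append, not_or]
      exact ⟨fun h => hxqc' (Sym2.eq_swap ▸ hQc' h), fun h => hp _ h hqx⟩
    have hfQp : ∀ e ∈ (Q.append p).edges, e ∉ ({f} : Set (Sym2 V)) := by
      rintro e he rfl
      rw [edges_append, List.mem_append] at he
      exact he.elim hfQ fun h => hp _ h (by simp [hfc'])
    obtain ⟨u, C, hC, hqxC, hfC⟩ :=
      exists_isCycle_mem_edges_avoiding_of_walk hxq.symm hqxf (Q.append p) hqxQp hfQp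
    exact ⟨u, C, hC, ⟨_, hqxC, hqx⟩, f, by simp [hfc'], fun h => hfC f h rfl⟩

theorem IsCycle.exists_overlapping_isCycle [DecidableEq V] {b x y : V} {c : G.Walk b b}
    (hc : c.IsCycle) (hx : x ∈ c.support) (hy : y ∈ c.support) (hxy : x ≠ y) (p : G.Walk y x)
    (hp : ∀ e ∈ p.edges, e ∉ c.edges) :
    ∃ (u : V) (C : G.Walk u u), C.IsCycle ∧ (∃ e ∈ C.edges, e ∈ c.edges) ∧
      ∃ f ∈ c.edges, f ∉ C.edges := by
  have hrot := c.rotate_edges x hx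
  obtain ⟨u, C, hC, ⟨e, heC, he⟩, f, hf, hfC⟩ :=
    (hc.rotate hx).exists_overlapping_isCycle_of_start ((mem_support_rotate_iff c x hx).mpr hy)
      hxy p fun e he => hrot.mem_iff.not.mpr (hp e he)
  exact ⟨u, C, hC, ⟨e, heC, hrot.mem_iff.mp he⟩, f, hrot.mem_iff.mp hf, hfC⟩

end Walk

end SimpleGraph

theorem cactus_cycles_share_at_most_one_vertex_general {V : Type*} (G : SimpleGraph V)
    (hcactus : ∀ (a b : V) (c₁ : G.Walk a a) (c₂ : G.Walk b b),
      c₁.IsCycle → c₂.IsCycle →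
      {e | e ∈ c₁.edges} ≠ {e | e ∈ c₂.edges} →
      ∀ e, e ∈ c₁.edges → e ∉ c₂.edges)
    (a b : V) (c₁ : G.Walk a a) (c₂ : G.Walk b b)
    (h₁ : c₁.IsCycle) (h₂ : c₂.IsCycle)
    (hne : {e | e ∈ c₁.edges} ≠ {e | e ∈ c₂.edges}) :
    ∀ x y : V, x ∈ c₁.support → x ∈ c₂.support →
      y ∈ c₁.support → y ∈ c₂.support → x = y := by
  classical
  intro x y hx₁ hx₂ hy₁ hy₂
  by_contra hxy
  obtain ⟨p, hp⟩ := c₁.exists_walk_edges_subset_of_mem_support hy₁ hx₁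
  obtain ⟨u, C, hC, ⟨e, heC, he⟩, f, hf, hfC⟩ := h₂.exists_overlapping_isCycle hx₂ hy₂ hxy p
    fun e he => hcactus a b c₁ c₂ h₁ h₂ hne e (hp he)
  exact hcactus u b C c₂ hC h₂ (fun hC₂ => hfC ((Set.ext_iff.mp hC₂ f).mpr hf)) e heC he

/-- In a cactus graph (a connected simple graph in which any two cycles with distinct
edge sets have disjoint edge sets), any two cycles with distinct edge sets share at
most one vertex. -/
theorem cactus_cycles_share_at_most_one_vertex {V : Type*} (G : SimpleGraph V)
    (hconn : G.Connected)
    (hcactus : ∀ (a b : V) (c₁ : G.Walk a a) (c₂ : G.Walk b b),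
      c₁.IsCycle → c₂.IsCycle →
      {e | e ∈ c₁.edges} ≠ {e | e ∈ c₂.edges} →
      ∀ e, e ∈ c₁.edges → e ∉ c₂.edges)
    (a b : V) (c₁ : G.Walk a a) (c₂ : G.Walk b b)
    (h₁ : c₁.IsCycle) (h₂ : c₂.IsCycle)
    (hne : {e | e ∈ c₁.edges} ≠ {e | e ∈ c₂.edges}) :
    ∀ x y : V, x ∈ c₁.support → x ∈ c₂.support →
      y ∈ c₁.support → y ∈ c₂.support → x = y :=
  cactus_cycles_share_at_most_one_vertex_general G hcactus a b c₁ c₂ h₁ h₂ hne
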